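/- Negativity of the t-derivative of the baseline proxy FDP at its root (point-mass prior): Fix q ∈ (0,1), γ ∈ (0,1), h > 0, c ≥ 0, and set μ₀ := h²γ/√(h²γ² + c) > 0. Define F₀(t) := Φ̄(t)/((1−γ)Φ̄(t) + γΦ̄(t − μ₀)) − q. If t₀ ∈ ℝ satisfies F₀(t₀) = 0, then F₀ is differentiable at t₀ and F₀′(t₀) < 0. -/

import Mathlib

/-!
Write `S = Φ̄` and `D(t) = (1 − γ) S(t) + γ S(t − μ₀)`. By the quotient rule, with `S' = −φ`,
`F₀'(t) = γ (S(t) φ(t − μ₀) − S(t − μ₀) φ(t)) / D(t)²`, and the bracket is negative as soon as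
`μ₀ > 0` because the Mills ratio `S / φ` is strictly decreasing. The latter holds since
`(S / φ)' = t S / φ − 1` and `t S(t) < ∫_t^∞ x φ(x) dx = φ(t)`.
-/

open MeasureTheory ProbabilityTheory Filter

/-- The survival function `Φ̄` of the standard normal distribution. -/
noncomputable def stdNormSurvival (t : ℝ) : ℝ :=
  ((gaussianReal 0 1) (Set.Ici t)).toReal

/-- The baseline proxy FDP curve minus the level `q`. -/
noncomputable def baselineProxyF (γ q μ₀ : ℝ) (t : ℝ) : ℝ :=
  stdNormSurvival t /
    ((1 - γ) * stdNormSurvival t + γ * stdNormSurvival (t - μ₀)) - q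

lemma setIntegral_pos_of_pos {X : Type*} [MeasurableSpace X] {μ : Measure X} {s : Set X}
    {f : X → ℝ} (hs : MeasurableSet s) (hμs : μ s ≠ 0) (hf : IntegrableOn f s μ)
    (hpos : ∀ x ∈ s, 0 < f x) : 0 < ∫ x in s, f x ∂μ := by
  rw [setIntegral_pos_iff_support_of_nonneg_ae ((ae_restrict_iff' hs).mpr
    (Eventually.of_forall fun x hx => (hpos x hx).le)) hf,
    Set.inter_eq_right.mpr fun x hx => Function.mem_support.mpr (hpos x hx).ne']
  exact pos_iff_ne_zero.mpr hμs

noncomputable def stdNormPDF : ℝ → ℝ := gaussianPDFReal 0 1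

lemma stdNormPDF_pos (x : ℝ) : 0 < stdNormPDF x := gaussianPDFReal_pos 0 1 x one_ne_zero

lemma integrable_stdNormPDF : Integrable stdNormPDF := integrable_gaussianPDFReal 0 1

lemma stdNormPDF_eq (x : ℝ) :
    stdNormPDF x = (Real.sqrt (2 * Real.pi))⁻¹ * Real.exp (-(x ^ 2) / 2) := by
  simp [stdNormPDF, gaussianPDFReal]

lemma hasDerivAt_stdNormPDF (x : ℝ) : HasDerivAt stdNormPDF (-x * stdNormPDF x) x := by
  have hexp : HasDerivAt (fun y : ℝ => Real.exp (-(y ^ 2) / 2)) (Real.exp (-(x ^ 2) / 2) * -x) x :=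
    (((hasDerivAt_pow 2 x).neg.div_const 2).congr_deriv (by ring)).exp
  rw [funext stdNormPDF_eq]
  exact (hexp.const_mul _).congr_deriv (by ring)

lemma tendsto_stdNormPDF_atTop : Tendsto stdNormPDF atTop (nhds 0) := by
  have hexp : Tendsto (fun x : ℝ => Real.exp (-(x ^ 2) / 2)) atTop (nhds 0) :=
    Real.tendsto_exp_atBot.comp <|
      (tendsto_neg_atBot_iff.mpr (tendsto_pow_atTop two_ne_zero)).atBot_div_const two_pos
  simpa [funext stdNormPDF_eq] using hexp.const_mul (Real.sqrt (2 * Real.pi))⁻¹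

lemma stdNormSurvival_eq_integral (t : ℝ) :
    stdNormSurvival t = ∫ x in Set.Ioi t, stdNormPDF x := by
  rw [stdNormSurvival, gaussianReal_apply_eq_integral 0 one_ne_zero,
    ENNReal.toReal_ofReal
      (setIntegral_nonneg measurableSet_Ici fun x _ => gaussianPDFReal_nonneg 0 1 x),
    integral_Ici_eq_integral_Ioi]
  rfl

lemma stdNormSurvival_pos (t : ℝ) : 0 < stdNormSurvival t := by
  rw [stdNormSurvival_eq_integral]
  exact setIntegral_pos_of_pos measurableSet_Ioi (by simp) integrable_stdNormPDF.integrableOn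
    fun x _ => stdNormPDF_pos x

lemma hasDerivAt_stdNormSurvival (t : ℝ) :
    HasDerivAt stdNormSurvival (-stdNormPDF t) t := by
  have hrepr : stdNormSurvival = fun u => stdNormSurvival 0 - ∫ x in (0 : ℝ)..u, stdNormPDF x := by
    funext u
    rw [stdNormSurvival_eq_integral, stdNormSurvival_eq_integral,
      ← intervalIntegral.integral_Ioi_sub_Ioi' integrable_stdNormPDF.integrableOn
        integrable_stdNormPDF.integrableOn]
    ring
  rw [hrepr]
  exact (intervalIntegral.integral_hasDerivAt_right integrable_stdNormPDF.intervalIntegrable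
    (stronglyMeasurable_gaussianPDFReal 0 1).stronglyMeasurableAtFilter
    (hasDerivAt_stdNormPDF t).continuousAt).const_sub _

section FirstMoment

variable {t : ℝ}

lemma hasDerivAt_neg_stdNormPDF (x : ℝ) :
    HasDerivAt (fun y => -stdNormPDF y) (x * stdNormPDF x) x :=
  (hasDerivAt_stdNormPDF x).neg.congr_deriv (by ring)

lemma tendsto_neg_stdNormPDF_atTop : Tendsto (fun y => -stdNormPDF y) atTop (nhds 0) := by
  simpa using tendsto_stdNormPDF_atTop.neg

lemma mul_stdNormPDF_nonneg_of_mem_Ioi (ht : 0 ≤ t) {x : ℝ} (hx : x ∈ Set.Ioi t) :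
    0 ≤ x * stdNormPDF x :=
  mul_nonneg (ht.trans (le_of_lt hx)) (stdNormPDF_pos x).le

lemma integrableOn_Ioi_mul_stdNormPDF (ht : 0 ≤ t) :
    IntegrableOn (fun x => x * stdNormPDF x) (Set.Ioi t) :=
  integrableOn_Ioi_deriv_of_nonneg' (fun x _ => hasDerivAt_neg_stdNormPDF x)
    (fun _ hx => mul_stdNormPDF_nonneg_of_mem_Ioi ht hx) tendsto_neg_stdNormPDF_atTop

lemma integral_Ioi_mul_stdNormPDF (ht : 0 ≤ t) :
    ∫ x in Set.Ioi t, x * stdNormPDF x = stdNormPDF t := by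
  rw [integral_Ioi_of_hasDerivAt_of_nonneg' (fun x _ => hasDerivAt_neg_stdNormPDF x)
    (fun _ hx => mul_stdNormPDF_nonneg_of_mem_Ioi ht hx) tendsto_neg_stdNormPDF_atTop]
  ring

end FirstMoment

lemma mul_stdNormSurvival_lt_stdNormPDF (t : ℝ) : t * stdNormSurvival t < stdNormPDF t := by
  rcases le_or_gt t 0 with ht | ht
  · nlinarith [stdNormSurvival_pos t, stdNormPDF_pos t]
  have hint : IntegrableOn (fun x => x * stdNormPDF x - t * stdNormPDF x) (Set.Ioi t) :=
    (integrableOn_Ioi_mul_stdNormPDF ht.le).sub (integrable_stdNormPDF.integrableOn.const_mul t)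
  have hpos : 0 < ∫ x in Set.Ioi t, (x * stdNormPDF x - t * stdNormPDF x) :=
    setIntegral_pos_of_pos measurableSet_Ioi (by simp) hint fun x hx => by
      rw [← sub_mul]; exact mul_pos (sub_pos.mpr hx) (stdNormPDF_pos x)
  rwa [integral_sub (integrableOn_Ioi_mul_stdNormPDF ht.le)
    (integrable_stdNormPDF.integrableOn.const_mul t), integral_Ioi_mul_stdNormPDF ht.le,
    integral_const_mul, ← stdNormSurvival_eq_integral, sub_pos] at hpos

noncomputable def stdNormMillsRatio (t : ℝ) : ℝ := stdNormSurvival t / stdNormPDF t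

lemma stdNormMillsRatio_strictAnti : StrictAnti stdNormMillsRatio := by
  refine strictAnti_of_deriv_neg fun x => ?_
  have hM : HasDerivAt stdNormMillsRatio _ x :=
    (hasDerivAt_stdNormSurvival x).div (hasDerivAt_stdNormPDF x) (stdNormPDF_pos x).ne'
  rw [hM.deriv]
  refine div_neg_of_neg_of_pos ?_ (pow_pos (stdNormPDF_pos x) 2)
  nlinarith [mul_stdNormSurvival_lt_stdNormPDF x, stdNormPDF_pos x]

lemma stdNormSurvival_mul_stdNormPDF_lt {s t : ℝ} (hst : s < t) :
    stdNormSurvival t * stdNormPDF s < stdNormSurvival s * stdNormPDF t := by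
  have := stdNormMillsRatio_strictAnti hst
  rwa [stdNormMillsRatio, stdNormMillsRatio,
    div_lt_div_iff₀ (stdNormPDF_pos t) (stdNormPDF_pos s)] at this

noncomputable def baselineProxyDenom (γ μ₀ t : ℝ) : ℝ :=
  (1 - γ) * stdNormSurvival t + γ * stdNormSurvival (t - μ₀)

lemma baselineProxyDenom_pos {γ : ℝ} (hγ₀ : 0 < γ) (hγ₁ : γ ≤ 1) (μ₀ t : ℝ) :
    0 < baselineProxyDenom γ μ₀ t :=
  add_pos_of_nonneg_of_pos (mul_nonneg (sub_nonneg.mpr hγ₁) (stdNormSurvival_pos t).le)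
    (mul_pos hγ₀ (stdNormSurvival_pos (t - μ₀)))

lemma hasDerivAt_baselineProxyF (γ q μ₀ t : ℝ) (hD : baselineProxyDenom γ μ₀ t ≠ 0) :
    HasDerivAt (baselineProxyF γ q μ₀)
      (γ * (stdNormSurvival t * stdNormPDF (t - μ₀) - stdNormSurvival (t - μ₀) * stdNormPDF t) /
        baselineProxyDenom γ μ₀ t ^ 2) t := by
  have hDenom : HasDerivAt (baselineProxyDenom γ μ₀)
      ((1 - γ) * -stdNormPDF t + γ * -stdNormPDF (t - μ₀)) t :=
    ((hasDerivAt_stdNormSurvival t).const_mul _).add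
      (((hasDerivAt_stdNormSurvival (t - μ₀)).comp_sub_const t μ₀).const_mul γ)
  refine (((hasDerivAt_stdNormSurvival t).div hDenom hD).sub_const q).congr_deriv ?_
  rw [baselineProxyDenom]
  ring

theorem baseline_proxy_FDP_deriv_neg_at_root_general
    (q γ h c : ℝ) (hγ : γ ∈ Set.Ioo (0 : ℝ) 1)
    (hh : 0 < h) (hc : 0 ≤ c)
    (t₀ : ℝ) :
    DifferentiableAt ℝ (baselineProxyF γ q (h ^ 2 * γ / Real.sqrt (h ^ 2 * γ ^ 2 + c))) t₀ ∧
      deriv (baselineProxyF γ q (h ^ 2 * γ / Real.sqrt (h ^ 2 * γ ^ 2 + c))) t₀ < 0 := by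
  obtain ⟨hγ₀, hγ₁⟩ := hγ
  have hμ₀ : 0 < h ^ 2 * γ / Real.sqrt (h ^ 2 * γ ^ 2 + c) :=
    div_pos (by positivity) (Real.sqrt_pos.mpr (by positivity))
  have hD := baselineProxyDenom_pos hγ₀ hγ₁.le (h ^ 2 * γ / Real.sqrt (h ^ 2 * γ ^ 2 + c)) t₀
  have hF := hasDerivAt_baselineProxyF γ q _ t₀ hD.ne'
  refine ⟨hF.differentiableAt, hF.deriv ▸ div_neg_of_neg_of_pos ?_ (pow_pos hD 2)⟩
  exact mul_neg_of_pos_of_neg hγ₀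
    (sub_neg.mpr (stdNormSurvival_mul_stdNormPDF_lt (sub_lt_self t₀ hμ₀)))

theorem baseline_proxy_FDP_deriv_neg_at_root
    (q γ h c : ℝ) (hq : q ∈ Set.Ioo (0 : ℝ) 1) (hγ : γ ∈ Set.Ioo (0 : ℝ) 1)
    (hh : 0 < h) (hc : 0 ≤ c)
    (t₀ : ℝ)
    (hroot : baselineProxyF γ q (h ^ 2 * γ / Real.sqrt (h ^ 2 * γ ^ 2 + c)) t₀ = 0) :
    DifferentiableAt ℝ (baselineProxyF γ q (h ^ 2 * γ / Real.sqrt (h ^ 2 * γ ^ 2 + c))) t₀ ∧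
      deriv (baselineProxyF γ q (h ^ 2 * γ / Real.sqrt (h ^ 2 * γ ^ 2 + c))) t₀ < 0 :=
  baseline_proxy_FDP_deriv_neg_at_root_general q γ h c hγ hh hc t₀
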